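/- Let T > 0, s ∈ (1,2) and p ∈ G_s[0,T]. Then the operators L_1 and L_2 commute on p: for every t ∈ [0,T], Σ_{k≥0} g_k'(L) (Σ_{j≥0} h_j'(L) p^{(2j+2k)}(t)) = Σ_{j≥0} h_j'(L) (Σ_{k≥0} g_k'(L) p^{(2k+2j)}(t)), i.e., (L_1(L_2 p))(t) = (L_2(L_1 p))(t), where (L_1 q)(t) = Σ_{k≥0} g_k'(L) q^{(2k)}(t) and (L_2 q)(t) = Σ_{k≥0} h_k'(L) q^{(2k)}(t). -/

import Mathlib

open Set Filter intervalIntegral Topology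

/-- The generating functions `g_k` of the beam model, defined by iterated integrals. -/
noncomputable def genG (ρ EI : ℝ → ℝ) (m : ℝ) : ℕ → ℝ → ℝ
  | 0 => fun _ => 1
  | 1 => fun x =>
      -(∫ s₁ in (0:ℝ)..x, ∫ s₂ in (0:ℝ)..s₁, ∫ s₃ in (0:ℝ)..s₂, ∫ s₄ in (0:ℝ)..s₃,
          ρ s₄ / EI s₂)
      - m * ∫ s₁ in (0:ℝ)..x, ∫ s₂ in (0:ℝ)..s₁, ∫ _s₃ in (0:ℝ)..s₂, 1 / EI s₂
  | (k + 2) => fun x =>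
      -(∫ s₁ in (0:ℝ)..x, ∫ s₂ in (0:ℝ)..s₁, ∫ s₃ in (0:ℝ)..s₂, ∫ s₄ in (0:ℝ)..s₃,
          ρ s₄ * genG ρ EI m (k + 1) s₄ / EI s₂)

/-- The generating functions `h_k` of the beam model, defined by iterated integrals. -/
noncomputable def genH (ρ EI : ℝ → ℝ) (J : ℝ) : ℕ → ℝ → ℝ
  | 0 => fun x => x
  | 1 => fun x =>
      -(∫ s₁ in (0:ℝ)..x, ∫ s₂ in (0:ℝ)..s₁, ∫ s₃ in (0:ℝ)..s₂, ∫ s₄ in (0:ℝ)..s₃,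
          s₄ * ρ s₄ / EI s₂)
      + J * ∫ s₁ in (0:ℝ)..x, ∫ s₂ in (0:ℝ)..s₁, 1 / EI s₂
  | (k + 2) => fun x =>
      -(∫ s₁ in (0:ℝ)..x, ∫ s₂ in (0:ℝ)..s₁, ∫ s₃ in (0:ℝ)..s₂, ∫ s₄ in (0:ℝ)..s₃,
          ρ s₄ * genH ρ EI J (k + 1) s₄ / EI s₂)

/-- Membership in the Gevrey class `G_s[0,T]`: a smooth function whose derivatives satisfy
`sup_{t ∈ [0,T]} |y⁽ᵐ⁾(t)| ≤ D^(m+1) (m!)^s` for some `D > 0`. -/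
def MemGevrey (s T : ℝ) (y : ℝ → ℝ) : Prop :=
  ContDiff ℝ (⊤ : ℕ∞) y ∧ ∃ D > 0, ∀ (n : ℕ), ∀ t ∈ Set.Icc (0:ℝ) T,
    |iteratedDeriv n y t| ≤ D ^ (n + 1) * (n.factorial : ℝ) ^ s


noncomputable def prim (u : ℝ → ℝ) (x : ℝ) : ℝ := ∫ t in (0:ℝ)..x, u t

lemma prim_hasDerivAt {u : ℝ → ℝ} (hu : Continuous u) (x : ℝ) :
    HasDerivAt (prim u) (u x) x :=
  (hu.integral_hasStrictDerivAt 0 x).hasDerivAt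

lemma prim_continuous {u : ℝ → ℝ} (hu : Continuous u) : Continuous (prim u) := by
  have : Differentiable ℝ (prim u) := fun x => (prim_hasDerivAt hu x).differentiableAt
  exact this.continuous

lemma prim_bound {u : ℝ → ℝ} {C x : ℝ} {n : ℕ} (hu : Continuous u) (hx : 0 ≤ x)
    (hC : 0 ≤ C)
    (h : ∀ t ∈ Icc (0:ℝ) x, |u t| ≤ C * t ^ n / n.factorial) :
    |prim u x| ≤ C * x ^ (n + 1) / (n + 1).factorial := by
  have h1 : |prim u x| ≤ ∫ t in (0:ℝ)..x, |u t| :=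
    intervalIntegral.abs_integral_le_integral_abs hx
  have h2 : (∫ t in (0:ℝ)..x, |u t|) ≤ ∫ t in (0:ℝ)..x, C * t ^ n / n.factorial := by
    apply intervalIntegral.integral_mono_on hx (hu.abs.intervalIntegrable _ _)
      (by apply Continuous.intervalIntegrable; continuity)
    exact h
  have h3 : (∫ t in (0:ℝ)..x, C * t ^ n / n.factorial)
      = C * x ^ (n + 1) / (n + 1).factorial := by
    have : (∫ t in (0:ℝ)..x, C * t ^ n / n.factorial)
        = (C / n.factorial) * ∫ t in (0:ℝ)..x, t ^ n := by
      rw [← intervalIntegral.integral_const_mul]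
      congr 1; ext t; ring
    rw [this, integral_pow]
    have hnf : ((n + 1).factorial : ℝ) = (n + 1) * n.factorial := by
      rw [Nat.factorial_succ]; push_cast; ring
    rw [hnf]
    have h4 : ((n:ℝ) + 1) ≠ 0 := by positivity
    have h5 : (n.factorial : ℝ) ≠ 0 := by positivity
    field_simp
    simp
  calc |prim u x| ≤ _ := h1
    _ ≤ _ := h2
    _ = _ := h3

lemma prim_bound_on {u : ℝ → ℝ} {C L : ℝ} {n : ℕ} (hu : Continuous u) (hC : 0 ≤ C)
    (h : ∀ t ∈ Icc (0:ℝ) L, |u t| ≤ C * t ^ n / n.factorial) :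
    ∀ x ∈ Icc (0:ℝ) L, |prim u x| ≤ C * x ^ (n + 1) / (n + 1).factorial := fun x hx =>
  prim_bound hu hx.1 hC fun t ht => h t ⟨ht.1, ht.2.trans hx.2⟩

noncomputable def QIn (r e f : ℝ → ℝ) : ℝ → ℝ :=
  fun s => prim (prim (fun t => r t * f t)) s / e s

noncomputable def QOp (r e f : ℝ → ℝ) : ℝ → ℝ :=
  fun x => -(prim (prim (QIn r e f)) x)

lemma QIn_continuous {r e f : ℝ → ℝ} (hr : Continuous r) (he : Continuous e)
    (he0 : ∀ x, e x ≠ 0) (hf : Continuous f) : Continuous (QIn r e f) :=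
  ((prim_continuous (prim_continuous (hr.mul hf))).div he he0)

lemma QOp_continuous {r e f : ℝ → ℝ} (hr : Continuous r) (he : Continuous e)
    (he0 : ∀ x, e x ≠ 0) (hf : Continuous f) : Continuous (QOp r e f) :=
  (prim_continuous (prim_continuous (QIn_continuous hr he he0 hf))).neg

lemma QOp_hasDerivAt {r e f : ℝ → ℝ} (hr : Continuous r) (he : Continuous e)
    (he0 : ∀ x, e x ≠ 0) (hf : Continuous f) (x : ℝ) :
    HasDerivAt (QOp r e f) (-(prim (QIn r e f) x)) x :=
  (prim_hasDerivAt (prim_continuous (QIn_continuous hr he he0 hf)) x).neg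

lemma QIn_bound {r e f : ℝ → ℝ} {L c M C : ℝ} {n : ℕ}
    (hr : Continuous r) (hf : Continuous f)
    (hc : 0 < c) (hce : ∀ x, c ≤ e x) (hM : ∀ x ∈ Icc (0:ℝ) L, |r x| ≤ M) (hM0 : 0 ≤ M)
    (hC : 0 ≤ C)
    (hfb : ∀ t ∈ Icc (0:ℝ) L, |f t| ≤ C * t ^ n / n.factorial) :
    ∀ x ∈ Icc (0:ℝ) L, |QIn r e f x| ≤ (M * C / c) * x ^ (n + 2) / (n + 2).factorial := by
  have hw : ∀ t ∈ Icc (0:ℝ) L, |r t * f t| ≤ (M * C) * t ^ n / n.factorial := by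
    intro t ht
    rw [abs_mul]
    calc |r t| * |f t| ≤ M * (C * t ^ n / n.factorial) :=
          mul_le_mul (hM t ht) (hfb t ht) (abs_nonneg _) hM0
      _ = (M * C) * t ^ n / n.factorial := by ring
  have h1 := prim_bound_on (hr.mul hf) (by positivity) hw
  have h2 := prim_bound_on (prim_continuous (hr.mul hf)) (by positivity) h1
  intro x hx
  have he0 : 0 < e x := hc.trans_le (hce x)
  have : |QIn r e f x| = |prim (prim (fun t => r t * f t)) x| / |e x| := by
    rw [QIn, abs_div]
  rw [this]
  have hex : |e x| = e x := abs_of_pos he0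
  calc |prim (prim (fun t => r t * f t)) x| / |e x|
      ≤ ((M * C) * x ^ (n + 2) / (n + 2).factorial) / c := by
        rw [hex]
        have hx0 : (0:ℝ) ≤ x := hx.1
        exact div_le_div₀ (by positivity) (h2 x hx) hc (hce x)
    _ = (M * C / c) * x ^ (n + 2) / (n + 2).factorial := by
        ring

lemma QOp_deriv_bound {r e f : ℝ → ℝ} {L c M C : ℝ} {n : ℕ}
    (hr : Continuous r) (he : Continuous e) (he0 : ∀ x, e x ≠ 0) (hf : Continuous f)
    (hc : 0 < c) (hce : ∀ x, c ≤ e x) (hM : ∀ x ∈ Icc (0:ℝ) L, |r x| ≤ M) (hM0 : 0 ≤ M)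
    (hC : 0 ≤ C)
    (hfb : ∀ t ∈ Icc (0:ℝ) L, |f t| ≤ C * t ^ n / n.factorial) :
    ∀ x ∈ Icc (0:ℝ) L,
      |prim (QIn r e f) x| ≤ (M * C / c) * x ^ (n + 3) / (n + 3).factorial := by
  have hb := QIn_bound (L := L) hr hf hc hce hM hM0 hC hfb
  have := prim_bound_on (QIn_continuous hr he he0 hf)
    (by positivity : (0:ℝ) ≤ M * C / c) hb
  simpa using this

lemma QOp_bound {r e f : ℝ → ℝ} {L c M C : ℝ} {n : ℕ}
    (hr : Continuous r) (he : Continuous e) (he0 : ∀ x, e x ≠ 0) (hf : Continuous f)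
    (hc : 0 < c) (hce : ∀ x, c ≤ e x) (hM : ∀ x ∈ Icc (0:ℝ) L, |r x| ≤ M) (hM0 : 0 ≤ M)
    (hC : 0 ≤ C)
    (hfb : ∀ t ∈ Icc (0:ℝ) L, |f t| ≤ C * t ^ n / n.factorial) :
    ∀ x ∈ Icc (0:ℝ) L,
      |QOp r e f x| ≤ (M * C / c) * x ^ (n + 4) / (n + 4).factorial := by
  have hb := QOp_deriv_bound (L := L) hr he he0 hf hc hce hM hM0 hC hfb
  have := prim_bound_on (prim_continuous (QIn_continuous hr he he0 hf))
    (by positivity : (0:ℝ) ≤ M * C / c) hb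
  intro x hx
  have h := this x hx
  rw [QOp, abs_neg]
  simpa using h

lemma genG_succ_eq (r e : ℝ → ℝ) (m : ℝ) (k : ℕ) :
    genG r e m (k + 2) = QOp r e (genG r e m (k + 1)) := by
  funext x
  simp only [genG, QOp, QIn, prim, intervalIntegral.integral_div]

lemma genH_succ_eq (r e : ℝ → ℝ) (J : ℝ) (k : ℕ) :
    genH r e J (k + 2) = QOp r e (genH r e J (k + 1)) := by
  funext x
  simp only [genH, QOp, QIn, prim, intervalIntegral.integral_div]

lemma genG_one_eq (r e : ℝ → ℝ) (m : ℝ) :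
    genG r e m 1 = fun x =>
      QOp r e (fun _ => 1) x - m * prim (prim (fun s => s * (1 / e s))) x := by
  funext x
  simp only [genG, QOp, QIn, prim, mul_one, intervalIntegral.integral_div,
    intervalIntegral.integral_const, smul_eq_mul, sub_zero, one_div]

lemma genH_one_eq (r e : ℝ → ℝ) (J : ℝ) :
    genH r e J 1 = fun x =>
      QOp (fun t => t * r t) e (fun _ => 1) x + J * prim (prim (fun s => 1 / e s)) x := by
  funext x
  simp only [genH, QOp, QIn, prim, mul_one, intervalIntegral.integral_div]

lemma integral_congr_Icc {L : ℝ} {F G : ℝ → ℝ} (h : ∀ s ∈ Icc (0:ℝ) L, F s = G s) :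
    ∀ x ∈ Icc (0:ℝ) L, (∫ s in (0:ℝ)..x, F s) = ∫ s in (0:ℝ)..x, G s := by
  intro x hx
  apply intervalIntegral.integral_congr
  intro t ht
  rw [uIcc_of_le hx.1] at ht
  exact h t ⟨ht.1, ht.2.trans hx.2⟩

lemma genG_congr {r e r' e' : ℝ → ℝ} {L m : ℝ}
    (hr : ∀ x ∈ Icc (0:ℝ) L, r x = r' x) (he : ∀ x ∈ Icc (0:ℝ) L, e x = e' x) :
    ∀ k, ∀ x ∈ Icc (0:ℝ) L, genG r e m k x = genG r' e' m k x := by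
  intro k
  induction k using Nat.strong_induction_on with
  | _ k ih =>
    match k with
    | 0 => intro x _; rfl
    | 1 =>
      intro x hx
      show -(∫ s₁ in (0:ℝ)..x, ∫ s₂ in (0:ℝ)..s₁, ∫ s₃ in (0:ℝ)..s₂, ∫ s₄ in (0:ℝ)..s₃,
          r s₄ / e s₂)
        - m * ∫ s₁ in (0:ℝ)..x, ∫ s₂ in (0:ℝ)..s₁, ∫ _s₃ in (0:ℝ)..s₂, 1 / e s₂ = _
      have h1 := integral_congr_Icc (L := L) (F := fun s₁ =>
          ∫ s₂ in (0:ℝ)..s₁, ∫ s₃ in (0:ℝ)..s₂, ∫ s₄ in (0:ℝ)..s₃, r s₄ / e s₂)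
        (G := fun s₁ =>
          ∫ s₂ in (0:ℝ)..s₁, ∫ s₃ in (0:ℝ)..s₂, ∫ s₄ in (0:ℝ)..s₃, r' s₄ / e' s₂) ?_ x hx
      have h2 := integral_congr_Icc (L := L) (F := fun s₁ =>
          ∫ s₂ in (0:ℝ)..s₁, ∫ _s₃ in (0:ℝ)..s₂, 1 / e s₂)
        (G := fun s₁ =>
          ∫ s₂ in (0:ℝ)..s₁, ∫ _s₃ in (0:ℝ)..s₂, 1 / e' s₂) ?_ x hx
      · show _ = -(∫ s₁ in (0:ℝ)..x, ∫ s₂ in (0:ℝ)..s₁, ∫ s₃ in (0:ℝ)..s₂,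
            ∫ s₄ in (0:ℝ)..s₃, r' s₄ / e' s₂)
          - m * ∫ s₁ in (0:ℝ)..x, ∫ s₂ in (0:ℝ)..s₁, ∫ _s₃ in (0:ℝ)..s₂, 1 / e' s₂
        rw [h1, h2]
      · intro s₁ h₁
        refine integral_congr_Icc (fun s₂ h₂ => ?_) s₁ h₁
        rw [he s₂ h₂]
      · intro s₁ h₁
        refine integral_congr_Icc (fun s₂ h₂ => ?_) s₁ h₁
        refine integral_congr_Icc (fun s₃ h₃ => ?_) s₂ h₂
        refine integral_congr_Icc (fun s₄ h₄ => ?_) s₃ h₃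
        rw [hr s₄ h₄, he s₂ h₂]
    | (k + 2) =>
      intro x hx
      show -(∫ s₁ in (0:ℝ)..x, ∫ s₂ in (0:ℝ)..s₁, ∫ s₃ in (0:ℝ)..s₂, ∫ s₄ in (0:ℝ)..s₃,
          r s₄ * genG r e m (k + 1) s₄ / e s₂) = _
      show _ = -(∫ s₁ in (0:ℝ)..x, ∫ s₂ in (0:ℝ)..s₁, ∫ s₃ in (0:ℝ)..s₂, ∫ s₄ in (0:ℝ)..s₃,
          r' s₄ * genG r' e' m (k + 1) s₄ / e' s₂)
      congr 1
      refine integral_congr_Icc (fun s₁ h₁ => ?_) x hx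
      refine integral_congr_Icc (fun s₂ h₂ => ?_) s₁ h₁
      refine integral_congr_Icc (fun s₃ h₃ => ?_) s₂ h₂
      refine integral_congr_Icc (fun s₄ h₄ => ?_) s₃ h₃
      rw [hr s₄ h₄, he s₂ h₂, ih (k + 1) (by omega) s₄ h₄]

lemma genH_congr {r e r' e' : ℝ → ℝ} {L J : ℝ}
    (hr : ∀ x ∈ Icc (0:ℝ) L, r x = r' x) (he : ∀ x ∈ Icc (0:ℝ) L, e x = e' x) :
    ∀ k, ∀ x ∈ Icc (0:ℝ) L, genH r e J k x = genH r' e' J k x := by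
  intro k
  induction k using Nat.strong_induction_on with
  | _ k ih =>
    match k with
    | 0 => intro x _; rfl
    | 1 =>
      intro x hx
      show -(∫ s₁ in (0:ℝ)..x, ∫ s₂ in (0:ℝ)..s₁, ∫ s₃ in (0:ℝ)..s₂, ∫ s₄ in (0:ℝ)..s₃,
          s₄ * r s₄ / e s₂)
        + J * ∫ s₁ in (0:ℝ)..x, ∫ s₂ in (0:ℝ)..s₁, 1 / e s₂ = _
      have h1 := integral_congr_Icc (L := L) (F := fun s₁ =>
          ∫ s₂ in (0:ℝ)..s₁, ∫ s₃ in (0:ℝ)..s₂, ∫ s₄ in (0:ℝ)..s₃, s₄ * r s₄ / e s₂)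
        (G := fun s₁ =>
          ∫ s₂ in (0:ℝ)..s₁, ∫ s₃ in (0:ℝ)..s₂, ∫ s₄ in (0:ℝ)..s₃, s₄ * r' s₄ / e' s₂) ?_ x hx
      have h2 := integral_congr_Icc (L := L) (F := fun s₁ =>
          ∫ s₂ in (0:ℝ)..s₁, 1 / e s₂)
        (G := fun s₁ => ∫ s₂ in (0:ℝ)..s₁, 1 / e' s₂) ?_ x hx
      · show _ = -(∫ s₁ in (0:ℝ)..x, ∫ s₂ in (0:ℝ)..s₁, ∫ s₃ in (0:ℝ)..s₂,
            ∫ s₄ in (0:ℝ)..s₃, s₄ * r' s₄ / e' s₂)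
          + J * ∫ s₁ in (0:ℝ)..x, ∫ s₂ in (0:ℝ)..s₁, 1 / e' s₂
        rw [h1, h2]
      · intro s₁ h₁
        refine integral_congr_Icc (fun s₂ h₂ => ?_) s₁ h₁
        rw [he s₂ h₂]
      · intro s₁ h₁
        refine integral_congr_Icc (fun s₂ h₂ => ?_) s₁ h₁
        refine integral_congr_Icc (fun s₃ h₃ => ?_) s₂ h₂
        refine integral_congr_Icc (fun s₄ h₄ => ?_) s₃ h₃
        rw [hr s₄ h₄, he s₂ h₂]
    | (k + 2) =>
      intro x hx
      show -(∫ s₁ in (0:ℝ)..x, ∫ s₂ in (0:ℝ)..s₁, ∫ s₃ in (0:ℝ)..s₂, ∫ s₄ in (0:ℝ)..s₃,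
          r s₄ * genH r e J (k + 1) s₄ / e s₂) = _
      show _ = -(∫ s₁ in (0:ℝ)..x, ∫ s₂ in (0:ℝ)..s₁, ∫ s₃ in (0:ℝ)..s₂, ∫ s₄ in (0:ℝ)..s₃,
          r' s₄ * genH r' e' J (k + 1) s₄ / e' s₂)
      congr 1
      refine integral_congr_Icc (fun s₁ h₁ => ?_) x hx
      refine integral_congr_Icc (fun s₂ h₂ => ?_) s₁ h₁
      refine integral_congr_Icc (fun s₃ h₃ => ?_) s₂ h₂
      refine integral_congr_Icc (fun s₄ h₄ => ?_) s₃ h₃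
      rw [hr s₄ h₄, he s₂ h₂, ih (k + 1) (by omega) s₄ h₄]

lemma genG_iterate (r e : ℝ → ℝ) (m : ℝ) :
    ∀ k, genG r e m (k + 1) = (QOp r e)^[k] (genG r e m 1) := by
  intro k
  induction k with
  | zero => rfl
  | succ k ih =>
    rw [Function.iterate_succ_apply', ← ih]
    exact genG_succ_eq r e m k

lemma genH_iterate (r e : ℝ → ℝ) (J : ℝ) :
    ∀ k, genH r e J (k + 1) = (QOp r e)^[k] (genH r e J 1) := by
  intro k
  induction k with
  | zero => rfl
  | succ k ih =>
    rw [Function.iterate_succ_apply', ← ih]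
    exact genH_succ_eq r e J k

lemma iterate_continuous {r e f : ℝ → ℝ} (hr : Continuous r) (he : Continuous e)
    (he0 : ∀ x, e x ≠ 0) (hf : Continuous f) (k : ℕ) : Continuous ((QOp r e)^[k] f) := by
  induction k with
  | zero => exact hf
  | succ k ih => rw [Function.iterate_succ_apply']; exact QOp_continuous hr he he0 ih

lemma iterate_bound {r e f : ℝ → ℝ} {L c M C : ℝ}
    (hr : Continuous r) (he : Continuous e) (he0 : ∀ x, e x ≠ 0) (hf : Continuous f)
    (hc : 0 < c) (hce : ∀ x, c ≤ e x) (hM : ∀ x ∈ Icc (0:ℝ) L, |r x| ≤ M) (hM0 : 0 ≤ M)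
    (hC : 0 ≤ C)
    (hfb : ∀ t ∈ Icc (0:ℝ) L, |f t| ≤ C * t ^ 1 / (1:ℕ).factorial) :
    ∀ k, ∀ t ∈ Icc (0:ℝ) L,
      |(QOp r e)^[k] f t| ≤ ((M / c) ^ k * C) * t ^ (4 * k + 1) / (4 * k + 1).factorial := by
  intro k
  induction k with
  | zero => simpa using hfb
  | succ k ih =>
    intro t ht
    rw [Function.iterate_succ_apply']
    have h := QOp_bound hr he he0 (iterate_continuous hr he he0 hf k) hc hce hM hM0
      (by positivity) ih t ht
    have harith : 4 * (k + 1) + 1 = 4 * k + 1 + 4 := by omega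
    rw [harith]
    calc |QOp r e ((QOp r e)^[k] f) t|
        ≤ M * ((M / c) ^ k * C) / c * t ^ (4 * k + 1 + 4) / ↑(4 * k + 1 + 4).factorial := h
      _ = (M / c) ^ (k + 1) * C * t ^ (4 * k + 1 + 4) / ↑(4 * k + 1 + 4).factorial := by
          rw [pow_succ]; ring

lemma iterate_derivWithin_bound {r e f : ℝ → ℝ} {L c M C : ℝ} (hL : 0 < L)
    (hr : Continuous r) (he : Continuous e) (he0 : ∀ x, e x ≠ 0) (hf : Continuous f)
    (hc : 0 < c) (hce : ∀ x, c ≤ e x) (hM : ∀ x ∈ Icc (0:ℝ) L, |r x| ≤ M) (hM0 : 0 ≤ M)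
    (hC : 0 ≤ C)
    (hfb : ∀ t ∈ Icc (0:ℝ) L, |f t| ≤ C * t ^ 1 / (1:ℕ).factorial) (k : ℕ) :
    |derivWithin ((QOp r e)^[k + 1] f) (Icc (0:ℝ) L) L|
      ≤ (M / c) ^ (k + 1) * C * L ^ (4 * k + 4) / (4 * k + 4).factorial := by
  have hfk : Continuous ((QOp r e)^[k] f) := iterate_continuous hr he he0 hf k
  have hLmem : L ∈ Icc (0:ℝ) L := ⟨hL.le, le_refl _⟩
  have hder : HasDerivAt ((QOp r e)^[k + 1] f)
      (-(prim (QIn r e ((QOp r e)^[k] f)) L)) L := by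
    rw [Function.iterate_succ_apply']
    exact QOp_hasDerivAt hr he he0 hfk L
  have hdw : derivWithin ((QOp r e)^[k + 1] f) (Icc (0:ℝ) L) L
      = -(prim (QIn r e ((QOp r e)^[k] f)) L) :=
    hder.hasDerivWithinAt.derivWithin (uniqueDiffOn_Icc hL L hLmem)
  rw [hdw, abs_neg]
  have hb := QOp_deriv_bound hr he he0 hfk hc hce hM hM0
    (by positivity : (0:ℝ) ≤ (M / c) ^ k * C)
    (iterate_bound hr he he0 hf hc hce hM hM0 hC hfb k) L hLmem
  have harith : 4 * k + 1 + 3 = 4 * k + 4 := by omega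
  rw [harith] at hb
  calc |prim (QIn r e ((QOp r e)^[k] f)) L|
      ≤ M * ((M / c) ^ k * C) / c * L ^ (4 * k + 4) / ↑(4 * k + 4).factorial := hb
    _ = (M / c) ^ (k + 1) * C * L ^ (4 * k + 4) / ↑(4 * k + 4).factorial := by
        rw [pow_succ]; ring

lemma genG_one_bound {r e : ℝ → ℝ} {L c M m : ℝ}
    (hr : Continuous r) (he : Continuous e) (he0 : ∀ x, e x ≠ 0)
    (hc : 0 < c) (hce : ∀ x, c ≤ e x) (hM : ∀ x ∈ Icc (0:ℝ) L, |r x| ≤ M) (hM0 : 0 ≤ M) :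
    ∀ t ∈ Icc (0:ℝ) L, |genG r e m 1 t|
      ≤ ((M / c) * L ^ 3 / 24 + (|m| / c) * L ^ 2 / 6) * t ^ 1 / (1:ℕ).factorial := by
  have h1 := QOp_bound (n := 0) (C := 1) (f := fun _ => (1:ℝ)) hr he he0 continuous_const hc hce hM hM0
    zero_le_one (fun t _ => by simp)
  have hv : ∀ s ∈ Icc (0:ℝ) L, |s * (1 / e s)| ≤ (1 / c) * s ^ 1 / (1:ℕ).factorial := by
    intro s hs
    have hes : 0 < e s := hc.trans_le (hce s)
    rw [abs_mul, abs_of_nonneg hs.1, abs_of_pos (by positivity : (0:ℝ) < 1 / e s)]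
    simp only [Nat.factorial_one, Nat.cast_one, div_one, pow_one]
    rw [mul_comm ((1:ℝ)/c) s]
    exact mul_le_mul_of_nonneg_left (one_div_le_one_div_of_le hc (hce s)) hs.1
  have hvc : Continuous (fun s => s * (1 / e s)) :=
    continuous_id.mul (continuous_const.div he he0)
  have hv2 := prim_bound_on hvc (by positivity) hv
  have hv3 := prim_bound_on (prim_continuous hvc) (by positivity) hv2
  intro t ht
  rw [genG_one_eq]
  have ht4 : t ^ (0 + 4) ≤ L ^ 3 * t := by
    have h3 : t ^ 3 ≤ L ^ 3 := pow_le_pow_left₀ ht.1 ht.2 3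
    calc t ^ (0 + 4) = t ^ 3 * t := by ring
      _ ≤ L ^ 3 * t := mul_le_mul_of_nonneg_right h3 ht.1
  have ht3 : t ^ (1 + 1 + 1) ≤ L ^ 2 * t := by
    have h2 : t ^ 2 ≤ L ^ 2 := pow_le_pow_left₀ ht.1 ht.2 2
    calc t ^ (1 + 1 + 1) = t ^ 2 * t := by ring
      _ ≤ L ^ 2 * t := mul_le_mul_of_nonneg_right h2 ht.1
  have e1 := h1 t ht
  have e2 := hv3 t ht
  have hfac4 : ((0 + 4 : ℕ).factorial : ℝ) = 24 := by norm_num [Nat.factorial]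
  have hfac3 : ((1 + 1 + 1 : ℕ).factorial : ℝ) = 6 := by norm_num [Nat.factorial]
  rw [hfac4] at e1
  rw [hfac3] at e2
  calc |QOp r e (fun _ => 1) t - m * prim (prim fun s => s * (1 / e s)) t|
      ≤ |QOp r e (fun _ => 1) t| + |m| * |prim (prim fun s => s * (1 / e s)) t| := by
        rw [← abs_mul]; exact abs_sub _ _
    _ ≤ M * 1 / c * t ^ (0 + 4) / 24 + |m| * ((1 / c) * t ^ (1 + 1 + 1) / 6) := by
        gcongr
    _ ≤ M * 1 / c * (L ^ 3 * t) / 24 + |m| * ((1 / c) * (L ^ 2 * t) / 6) := by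
        gcongr
    _ ≤ ((M / c) * L ^ 3 / 24 + (|m| / c) * L ^ 2 / 6) * t ^ 1 / (1:ℕ).factorial := by
        simp only [Nat.factorial_one, Nat.cast_one, div_one, pow_one]
        apply le_of_eq
        ring

lemma genH_one_bound {r e : ℝ → ℝ} {L c M J : ℝ} (hL : 0 ≤ L)
    (hr : Continuous r) (he : Continuous e) (he0 : ∀ x, e x ≠ 0)
    (hc : 0 < c) (hce : ∀ x, c ≤ e x) (hM : ∀ x ∈ Icc (0:ℝ) L, |r x| ≤ M) (hM0 : 0 ≤ M) :
    ∀ t ∈ Icc (0:ℝ) L, |genH r e J 1 t|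
      ≤ ((L * M / c) * L ^ 3 / 24 + (|J| / c) * L / 2) * t ^ 1 / (1:ℕ).factorial := by
  have hr' : Continuous (fun t => t * r t) := continuous_id.mul hr
  have hM' : ∀ x ∈ Icc (0:ℝ) L, |x * r x| ≤ L * M := by
    intro x hx
    rw [abs_mul, abs_of_nonneg hx.1]
    exact mul_le_mul hx.2 (hM x hx) (abs_nonneg _) hL
  have h1 := QOp_bound (n := 0) (C := 1) (f := fun _ => (1:ℝ)) hr' he he0 continuous_const
    hc hce hM' (by positivity) zero_le_one (fun t _ => by simp)
  have hv : ∀ s ∈ Icc (0:ℝ) L, |1 / e s| ≤ (1 / c) * s ^ 0 / (0:ℕ).factorial := by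
    intro s hs
    have hes : 0 < e s := hc.trans_le (hce s)
    rw [abs_of_pos (by positivity : (0:ℝ) < 1 / e s)]
    simpa using one_div_le_one_div_of_le hc (hce s)
  have hvc : Continuous (fun s => 1 / e s) := continuous_const.div he he0
  have hv2 := prim_bound_on hvc (by positivity) hv
  have hv3 := prim_bound_on (prim_continuous hvc) (by positivity) hv2
  intro t ht
  rw [genH_one_eq]
  have ht4 : t ^ (0 + 4) ≤ L ^ 3 * t := by
    have h3 : t ^ 3 ≤ L ^ 3 := pow_le_pow_left₀ ht.1 ht.2 3
    calc t ^ (0 + 4) = t ^ 3 * t := by ring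
      _ ≤ L ^ 3 * t := mul_le_mul_of_nonneg_right h3 ht.1
  have ht2 : t ^ (0 + 1 + 1) ≤ L * t := by
    calc t ^ (0 + 1 + 1) = t * t := by ring
      _ ≤ L * t := mul_le_mul_of_nonneg_right ht.2 ht.1
  have e1 := h1 t ht
  have e2 := hv3 t ht
  have hfac4 : ((0 + 4 : ℕ).factorial : ℝ) = 24 := by norm_num [Nat.factorial]
  have hfac2 : ((0 + 1 + 1 : ℕ).factorial : ℝ) = 2 := by norm_num [Nat.factorial]
  rw [hfac4] at e1
  rw [hfac2] at e2
  calc |QOp (fun t => t * r t) e (fun _ => 1) t + J * prim (prim fun s => 1 / e s) t|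
      ≤ |QOp (fun t => t * r t) e (fun _ => 1) t| + |J| * |prim (prim fun s => 1 / e s) t| := by
        rw [← abs_mul]; exact abs_add_le _ _
    _ ≤ L * M * 1 / c * t ^ (0 + 4) / 24 + |J| * ((1 / c) * t ^ (0 + 1 + 1) / 2) := by
        gcongr
    _ ≤ L * M * 1 / c * (L ^ 3 * t) / 24 + |J| * ((1 / c) * (L * t) / 2) := by
        gcongr
    _ ≤ ((L * M / c) * L ^ 3 / 24 + (|J| / c) * L / 2) * t ^ 1 / (1:ℕ).factorial := by
        simp only [Nat.factorial_one, Nat.cast_one, div_one, pow_one]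
        apply le_of_eq
        ring

lemma nat_choose_le_two_pow (n k : ℕ) : n.choose k ≤ 2 ^ n := by
  rcases le_or_gt k n with h | h
  · calc n.choose k ≤ ∑ m ∈ Finset.range (n + 1), n.choose m :=
        Finset.single_le_sum (fun _ _ => Nat.zero_le _)
          (Finset.mem_range.2 (Nat.lt_succ_of_le h))
      _ = 2 ^ n := Nat.sum_range_choose n
  · rw [Nat.choose_eq_zero_of_lt h]; exact Nat.zero_le _

lemma nat_fact_add_le (a b : ℕ) : (a + b).factorial ≤ 2 ^ (a + b) * (a.factorial * b.factorial) := by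
  have h := Nat.choose_mul_factorial_mul_factorial (Nat.le_add_right a b)
  rw [Nat.add_sub_cancel_left] at h
  calc (a + b).factorial = (a + b).choose a * a.factorial * b.factorial := h.symm
    _ ≤ 2 ^ (a + b) * a.factorial * b.factorial := by
        exact Nat.mul_le_mul_right _ (Nat.mul_le_mul_right _ (nat_choose_le_two_pow _ _))
    _ = 2 ^ (a + b) * (a.factorial * b.factorial) := by ring

lemma nat_sq_fact_le (n : ℕ) : n.factorial * n.factorial ≤ (n + n).factorial :=
  Nat.le_of_dvd (Nat.factorial_pos _) (Nat.factorial_mul_factorial_dvd_factorial_add n n)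

lemma nat_fact_add_four (m : ℕ) : (m + 4).factorial ≤ (m + 4) ^ 4 * m.factorial := by
  have h : (m + 4).factorial = (m + 4) * ((m + 3) * ((m + 2) * ((m + 1) * m.factorial))) := by
    simp [Nat.factorial_succ, show m + 4 = (m+3)+1 by omega, show m + 3 = (m+2)+1 by omega,
      show m + 2 = (m+1)+1 by omega]
  rw [h]
  have h4 : (m + 4) ^ 4 * m.factorial
      = (m + 4) * ((m + 4) * ((m + 4) * ((m + 4) * m.factorial))) := by ring
  rw [h4]
  have h1 : m + 3 ≤ m + 4 := by omega
  have h2 : m + 2 ≤ m + 4 := by omega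
  have h3 : m + 1 ≤ m + 4 := by omega
  exact Nat.mul_le_mul_left _ (Nat.mul_le_mul h1 (Nat.mul_le_mul h2
    (Nat.mul_le_mul h3 (le_refl _))))

lemma nat_pow4_le (n : ℕ) : n ^ 4 ≤ 16 ^ n := by
  calc n ^ 4 ≤ (2 ^ n) ^ 4 := Nat.pow_le_pow_left (Nat.lt_two_pow_self (n := n)).le 4
    _ = 16 ^ n := by rw [← Nat.pow_mul, Nat.mul_comm, Nat.pow_mul]

lemma fact_ratio (k : ℕ) :
    ((2 * (k + 2)).factorial : ℝ) ^ 2 ≤ 4096 * 16 ^ (k + 1) * ((4 * k + 4).factorial : ℝ) := by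
  have h1 : (2 * (k + 2)).factorial * (2 * (k + 2)).factorial ≤ (4 * k + 8).factorial := by
    have := nat_sq_fact_le (2 * (k + 2))
    have harith : 2 * (k + 2) + 2 * (k + 2) = 4 * k + 8 := by omega
    rwa [harith] at this
  have h2 : (4 * k + 8).factorial ≤ (4 * k + 8) ^ 4 * (4 * k + 4).factorial := by
    have := nat_fact_add_four (4 * k + 4)
    have harith : 4 * k + 4 + 4 = 4 * k + 8 := by omega
    rwa [harith] at this
  have h3 : (4 * k + 8) ^ 4 ≤ 4096 * 16 ^ (k + 1) := by
    have : 4 * k + 8 = 4 * (k + 2) := by omega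
    rw [this]
    calc (4 * (k + 2)) ^ 4 = 256 * (k + 2) ^ 4 := by ring
      _ ≤ 256 * 16 ^ (k + 2) := Nat.mul_le_mul_left _ (nat_pow4_le (k + 2))
      _ = 4096 * 16 ^ (k + 1) := by rw [pow_succ]; ring_nf
  have : (2 * (k + 2)).factorial * (2 * (k + 2)).factorial
      ≤ (4096 * 16 ^ (k + 1)) * (4 * k + 4).factorial :=
    h1.trans (h2.trans (Nat.mul_le_mul_right _ h3))
  calc ((2 * (k + 2)).factorial : ℝ) ^ 2
      = ((2 * (k + 2)).factorial * (2 * (k + 2)).factorial : ℕ) := by push_cast; ring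
    _ ≤ (((4096 * 16 ^ (k + 1)) * (4 * k + 4).factorial : ℕ) : ℝ) := by exact_mod_cast this
    _ = 4096 * 16 ^ (k + 1) * ((4 * k + 4).factorial : ℝ) := by push_cast; ring

lemma seq_bound {a : ℕ → ℝ} {K C L B : ℝ} (hK : 0 ≤ K) (hC : 0 ≤ C) (hL : 0 ≤ L)
    (hB1 : 1 ≤ B) (hB2 : 16 * K * L ^ 4 ≤ B) (hB3 : 4096 * C ≤ B)
    (hB4 : 4 * |a 0| ≤ B) (hB5 : 4 * |a 1| ≤ B)
    (h : ∀ k, |a (k + 2)| ≤ K ^ (k + 1) * C * L ^ (4 * k + 4) / (4 * k + 4).factorial) :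
    ∀ k, |a k| ≤ B ^ (k + 1) / ((2 * k).factorial : ℝ) ^ 2 := by
  have hB0 : 0 < B := lt_of_lt_of_le one_pos hB1
  intro k
  match k with
  | 0 =>
    have h0 : ((2 * 0).factorial : ℝ) ^ 2 = 1 := by norm_num
    rw [h0, div_one, zero_add, pow_one]
    linarith [abs_nonneg (a 0)]
  | 1 =>
    have : ((2 * 1).factorial : ℝ) ^ 2 = 4 := by norm_num [Nat.factorial]
    rw [this]
    have hBB : B ≤ B ^ 2 := by nlinarith
    linarith
  | (k + 2) =>
    have hfr := fact_ratio k
    have hF : (0:ℝ) < ((4 * k + 4).factorial : ℝ) := by positivity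
    have hS : (0:ℝ) < ((2 * (k + 2)).factorial : ℝ) ^ 2 := by positivity
    calc |a (k + 2)| ≤ K ^ (k + 1) * C * L ^ (4 * k + 4) / ↑(4 * k + 4).factorial := h k
        _ ≤ B ^ (k + 2 + 1) / ((2 * (k + 2)).factorial : ℝ) ^ 2 := by
            rw [div_le_div_iff₀ hF hS]
            calc K ^ (k + 1) * C * L ^ (4 * k + 4) * ((2 * (k + 2)).factorial : ℝ) ^ 2
                ≤ K ^ (k + 1) * C * L ^ (4 * k + 4)
                    * (4096 * 16 ^ (k + 1) * ((4 * k + 4).factorial : ℝ)) := by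
                  have hnn : (0:ℝ) ≤ K ^ (k + 1) * C * L ^ (4 * k + 4) := by positivity
                  exact mul_le_mul_of_nonneg_left hfr hnn
              _ = (4096 * C) * (16 * K * L ^ 4) ^ (k + 1) * ((4 * k + 4).factorial : ℝ) := by
                  rw [mul_pow, mul_pow, ← pow_mul]
                  ring_nf
              _ ≤ B * B ^ (k + 1) * ((4 * k + 4).factorial : ℝ) := by
                  have h1 : (16 * K * L ^ 4) ^ (k + 1) ≤ B ^ (k + 1) :=
                    pow_le_pow_left₀ (by positivity) hB2 _
                  have h2 : (0:ℝ) ≤ (16 * K * L ^ 4) ^ (k + 1) := by positivity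
                  apply mul_le_mul_of_nonneg_right _ hF.le
                  exact mul_le_mul hB3 h1 h2 hB0.le
              _ ≤ B ^ (k + 2 + 1) * ((4 * k + 4).factorial : ℝ) := by
                  apply mul_le_mul_of_nonneg_right _ hF.le
                  calc B * B ^ (k + 1) = B ^ (k + 2) := by rw [← pow_succ']
                    _ ≤ B ^ (k + 2 + 1) := pow_le_pow_right₀ hB1 (by omega)

lemma summable_aux {q t : ℝ} (hq : 0 < q) (ht : t < 0) :
    Summable (fun k : ℕ => q ^ k * ((2 * k).factorial : ℝ) ^ t) := by
  apply summable_of_ratio_norm_eventually_le (r := 1/2) (by norm_num)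
  have hquad : Tendsto (fun k : ℕ => ((2 * k + 1) * (2 * k + 2) : ℝ)) atTop atTop := by
    apply tendsto_atTop_mono _ tendsto_natCast_atTop_atTop
    intro k
    have hk : (0:ℝ) ≤ (k:ℝ) := Nat.cast_nonneg k
    nlinarith
  have hrp : Tendsto (fun x : ℝ => x ^ t) atTop (𝓝 0) := by
    have := tendsto_rpow_neg_atTop (y := -t) (by linarith)
    simpa using this
  have hten : Tendsto (fun k : ℕ => ((2 * k + 1) * (2 * k + 2) : ℝ) ^ t) atTop (𝓝 0) :=
    hrp.comp hquad
  have hev : ∀ᶠ k : ℕ in atTop, ((2 * k + 1) * (2 * k + 2) : ℝ) ^ t < 1 / (2 * q) :=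
    hten.eventually_lt_const (by positivity)
  filter_upwards [hev] with k hk
  have hfac : ((2 * (k + 1)).factorial : ℝ)
      = ((2 * k).factorial : ℝ) * ((2 * k + 1) * (2 * k + 2)) := by
    have : 2 * (k + 1) = (2 * k + 1) + 1 := by omega
    rw [this, Nat.factorial_succ, show (2*k+1) = (2*k) + 1 from rfl, Nat.factorial_succ]
    push_cast
    ring
  have hfp : (0:ℝ) < ((2 * k).factorial : ℝ) := by positivity
  have hqp : (0:ℝ) < ((2 * k + 1) * (2 * k + 2) : ℝ) := by positivity
  have hsplit : ((2 * (k + 1)).factorial : ℝ) ^ t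
      = ((2 * k).factorial : ℝ) ^ t * ((2 * k + 1) * (2 * k + 2) : ℝ) ^ t := by
    rw [hfac, Real.mul_rpow hfp.le hqp.le]
  have hpos1 : (0:ℝ) < ((2 * k).factorial : ℝ) ^ t := Real.rpow_pos_of_pos hfp t
  have hpos2 : (0:ℝ) < ((2 * k + 1) * (2 * k + 2) : ℝ) ^ t := Real.rpow_pos_of_pos hqp t
  rw [Real.norm_eq_abs, Real.norm_eq_abs, abs_of_pos (by positivity),
    abs_of_pos (by positivity : (0:ℝ) < q ^ k * ((2 * k).factorial : ℝ) ^ t)]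
  rw [pow_succ, hsplit]
  calc q ^ k * q * (((2 * k).factorial : ℝ) ^ t * ((2 * k + 1) * (2 * k + 2) : ℝ) ^ t)
      = (q * ((2 * k + 1) * (2 * k + 2) : ℝ) ^ t) * (q ^ k * ((2 * k).factorial : ℝ) ^ t) := by
        ring
    _ ≤ (q * (1 / (2 * q))) * (q ^ k * ((2 * k).factorial : ℝ) ^ t) := by
        apply mul_le_mul_of_nonneg_right _ (by positivity)
        exact mul_le_mul_of_nonneg_left hk.le hq.le
    _ = 1 / 2 * (q ^ k * ((2 * k).factorial : ℝ) ^ t) := by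
        field_simp

lemma Fterm_bound {B D s : ℝ} (hB : 1 ≤ B) (hD : 0 < D) (hs₂ : s < 2) (k j : ℕ)
    {ak bj cn : ℝ}
    (hak : |ak| ≤ B ^ (k + 1) / ((2 * k).factorial : ℝ) ^ 2)
    (hbj : |bj| ≤ B ^ (j + 1) / ((2 * j).factorial : ℝ) ^ 2)
    (hcn : |cn| ≤ D ^ (2 * j + 2 * k + 1) * ((2 * j + 2 * k).factorial : ℝ) ^ s) :
    |ak * (bj * cn)| ≤ (B ^ 2 * D) *
      ((16 * B * D ^ 2) ^ k * ((2 * k).factorial : ℝ) ^ ((s - 2) / 2)) *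
      ((16 * B * D ^ 2) ^ j * ((2 * j).factorial : ℝ) ^ ((s - 2) / 2)) := by
  set Sk : ℝ := ((2 * k).factorial : ℝ) with hSk
  set Sj : ℝ := ((2 * j).factorial : ℝ) with hSj
  set SN : ℝ := ((2 * j + 2 * k).factorial : ℝ) with hSN
  have hSkp : (0:ℝ) < Sk := by rw [hSk]; positivity
  have hSjp : (0:ℝ) < Sj := by rw [hSj]; positivity
  have hSNp : (0:ℝ) < SN := by rw [hSN]; positivity
  have h1 : SN ^ s = SN ^ (s - 2) * SN ^ 2 := by
    rw [← Real.rpow_natCast SN 2, ← Real.rpow_add hSNp]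
    norm_num
  have h2 : SN ^ 2 ≤ 16 ^ (j + k) * (Sj ^ 2 * Sk ^ 2) := by
    have hnat := nat_fact_add_le (2 * j) (2 * k)
    have hcast : SN ≤ 2 ^ (2 * j + 2 * k) * (Sj * Sk) := by
      rw [hSN, hSj, hSk]
      exact_mod_cast hnat
    have hsq : SN ^ 2 ≤ (2 ^ (2 * j + 2 * k) * (Sj * Sk)) ^ 2 :=
      pow_le_pow_left₀ hSNp.le hcast 2
    calc SN ^ 2 ≤ (2 ^ (2 * j + 2 * k) * (Sj * Sk)) ^ 2 := hsq
      _ = ((2:ℝ) ^ (2 * j + 2 * k)) ^ 2 * (Sj ^ 2 * Sk ^ 2) := by ring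
      _ = 16 ^ (j + k) * (Sj ^ 2 * Sk ^ 2) := by
          congr 1
          rw [← pow_mul]
          have harith : (2 * j + 2 * k) * 2 = 4 * (j + k) := by omega
          rw [harith, pow_mul]
          norm_num
  have h3 : SN ^ (s - 2) ≤ Sj ^ ((s - 2) / 2) * Sk ^ ((s - 2) / 2) := by
    have hj' : Sj ≤ SN := by
      rw [hSj, hSN]
      exact_mod_cast Nat.factorial_le (by omega)
    have hk' : Sk ≤ SN := by
      rw [hSk, hSN]
      exact_mod_cast Nat.factorial_le (by omega)
    have hle : Sj * Sk ≤ SN ^ 2 := by nlinarith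
    have he1 : SN ^ (s - 2) = (SN ^ 2) ^ ((s - 2) / 2) := by
      rw [← Real.rpow_natCast SN 2, ← Real.rpow_mul hSNp.le]
      congr 1
      push_cast
      ring
    rw [he1, ← Real.mul_rpow hSjp.le hSkp.le]
    exact Real.rpow_le_rpow_of_nonpos (by positivity) hle (by linarith)
  have hcn' : |cn| ≤ D ^ (2 * j + 2 * k + 1) *
      ((Sj ^ ((s - 2) / 2) * Sk ^ ((s - 2) / 2)) * (16 ^ (j + k) * (Sj ^ 2 * Sk ^ 2))) := by
    calc |cn| ≤ D ^ (2 * j + 2 * k + 1) * SN ^ s := hcn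
      _ = D ^ (2 * j + 2 * k + 1) * (SN ^ (s - 2) * SN ^ 2) := by rw [h1]
      _ ≤ D ^ (2 * j + 2 * k + 1) *
          ((Sj ^ ((s - 2) / 2) * Sk ^ ((s - 2) / 2)) * (16 ^ (j + k) * (Sj ^ 2 * Sk ^ 2))) := by
          apply mul_le_mul_of_nonneg_left _ (by positivity)
          apply mul_le_mul h3 h2 (by positivity) (by positivity)
  have hstep : |ak * (bj * cn)| ≤ (B ^ (k + 1) / Sk ^ 2) * ((B ^ (j + 1) / Sj ^ 2) *
      (D ^ (2 * j + 2 * k + 1) *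
        ((Sj ^ ((s - 2) / 2) * Sk ^ ((s - 2) / 2)) * (16 ^ (j + k) * (Sj ^ 2 * Sk ^ 2))))) := by
    rw [abs_mul, abs_mul]
    apply mul_le_mul hak _ (by positivity) (by positivity)
    apply mul_le_mul hbj hcn' (abs_nonneg _) (by positivity)
  refine hstep.trans (le_of_eq ?_)
  have eD : D ^ (2 * j + 2 * k + 1) = (D ^ 2) ^ j * (D ^ 2) ^ k * D := by
    rw [pow_succ, pow_add, pow_mul, pow_mul]
  have e16 : (16:ℝ) ^ (j + k) = 16 ^ j * 16 ^ k := pow_add 16 j k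
  rw [eD, e16, mul_pow, mul_pow, mul_pow, mul_pow]
  field_simp
  ring

lemma summable_F {a b c : ℕ → ℝ} {B D s : ℝ} (hB : 1 ≤ B) (hD : 0 < D) (hs : s < 2)
    (ha : ∀ k, |a k| ≤ B ^ (k + 1) / ((2 * k).factorial : ℝ) ^ 2)
    (hb : ∀ k, |b k| ≤ B ^ (k + 1) / ((2 * k).factorial : ℝ) ^ 2)
    (hc : ∀ n, |c n| ≤ D ^ (n + 1) * ((n).factorial : ℝ) ^ s) :
    Summable (Function.uncurry fun k j => a k * (b j * c (2 * j + 2 * k))) := by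
  set q : ℝ := 16 * B * D ^ 2 with hq_def
  have hq : 0 < q := by rw [hq_def]; positivity
  have hu : Summable (fun k : ℕ => q ^ k * ((2 * k).factorial : ℝ) ^ ((s - 2) / 2)) :=
    summable_aux hq (by linarith)
  have hun : ∀ k : ℕ, 0 ≤ q ^ k * ((2 * k).factorial : ℝ) ^ ((s - 2) / 2) := by
    intro k
    have : (0:ℝ) < ((2 * k).factorial : ℝ) := by positivity
    positivity
  have hprod := hu.mul_of_nonneg hu hun hun
  have hgood := hprod.mul_left (B ^ 2 * D)
  apply Summable.of_abs
  apply Summable.of_nonneg_of_le (fun x => abs_nonneg _) _ hgood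
  rintro ⟨k, j⟩
  refine le_trans (Fterm_bound hB hD hs k j (ha k) (hb j) (hc (2 * j + 2 * k)))
    (le_of_eq ?_)
  simp only [Function.uncurry]
  ring

lemma tsum_swap_final {a b c : ℕ → ℝ}
    (h : Summable (Function.uncurry fun k j => a k * (b j * c (2 * j + 2 * k)))) :
    (∑' k : ℕ, a k * ∑' j : ℕ, b j * c (2 * j + 2 * k)) =
      ∑' j : ℕ, b j * ∑' k : ℕ, a k * c (2 * k + 2 * j) := by
  have h1 : (∑' k : ℕ, a k * ∑' j : ℕ, b j * c (2 * j + 2 * k))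
      = ∑' k : ℕ, ∑' j : ℕ, a k * (b j * c (2 * j + 2 * k)) :=
    tsum_congr fun k => (tsum_mul_left).symm
  have h2 : (∑' j : ℕ, b j * ∑' k : ℕ, a k * c (2 * k + 2 * j))
      = ∑' j : ℕ, ∑' k : ℕ, a k * (b j * c (2 * j + 2 * k)) := by
    refine tsum_congr fun j => ?_
    rw [← tsum_mul_left]
    refine tsum_congr fun k => ?_
    have : 2 * k + 2 * j = 2 * j + 2 * k := by omega
    rw [this]
    ring
  rw [h1, h2]
  exact (Summable.tsum_comm h).symm
/-- the operators `L₁` and `L₂` commute on `p ∈ G_s[0,T]`: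
`Σ_k g_k'(L) (Σ_j h_j'(L) p⁽²ʲ⁺²ᵏ⁾(t)) = Σ_j h_j'(L) (Σ_k g_k'(L) p⁽²ᵏ⁺²ʲ⁾(t))`
for every `t ∈ [0,T]`. -/
theorem stmt13 (L m J : ℝ) (hL : 0 < L) (hm : 0 < m) (hJ : 0 < J)
    (ρ EI : ℝ → ℝ)
    (hρ : ContDiffOn ℝ 4 ρ (Set.Icc 0 L)) (hEI : ContDiffOn ℝ 4 EI (Set.Icc 0 L))
    (hρpos : ∃ c > 0, ∀ x ∈ Set.Icc (0:ℝ) L, c ≤ ρ x)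
    (hEIpos : ∃ c > 0, ∀ x ∈ Set.Icc (0:ℝ) L, c ≤ EI x)
    (T s : ℝ) (hT : 0 < T) (hs₁ : 1 < s) (hs₂ : s < 2)
    (p : ℝ → ℝ) (hp : MemGevrey s T p) :
    ∀ t ∈ Set.Icc (0:ℝ) T,
      (∑' k : ℕ, derivWithin (genG ρ EI m k) (Set.Icc 0 L) L *
        ∑' j : ℕ, derivWithin (genH ρ EI J j) (Set.Icc 0 L) L *
          iteratedDeriv (2 * j + 2 * k) p t) =
      (∑' j : ℕ, derivWithin (genH ρ EI J j) (Set.Icc 0 L) L *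
        ∑' k : ℕ, derivWithin (genG ρ EI m k) (Set.Icc 0 L) L *
          iteratedDeriv (2 * k + 2 * j) p t) := by
  obtain ⟨cρ, hcρ0, hρge⟩ := hρpos
  obtain ⟨ce, hce0, hEIge⟩ := hEIpos
  obtain ⟨hpc, D, hD0, hDb⟩ := hp
  intro t ht
  -- clamped versions of ρ and EI
  set π : ℝ → ℝ := fun x => min (max x 0) L with hπ_def
  have hπmem : ∀ x, π x ∈ Icc (0:ℝ) L :=
    fun x => ⟨le_min (le_max_right x 0) hL.le, min_le_right _ _⟩
  have hπeq : ∀ x ∈ Icc (0:ℝ) L, π x = x := by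
    intro x hx
    simp only [hπ_def]
    rw [max_eq_left hx.1, min_eq_left hx.2]
  have hπc : Continuous π := (continuous_id.max continuous_const).min continuous_const
  set r : ℝ → ℝ := fun x => ρ (π x) with hr_def
  set e : ℝ → ℝ := fun x => EI (π x) with he_def
  have hrc : Continuous r := hρ.continuousOn.comp_continuous hπc hπmem
  have hec : Continuous e := hEI.continuousOn.comp_continuous hπc hπmem
  have hceE : ∀ x, ce ≤ e x := fun x => hEIge _ (hπmem x)
  have he0 : ∀ x, e x ≠ 0 := fun x => (hce0.trans_le (hceE x)).ne'
  obtain ⟨M0, hM0b⟩ := isCompact_Icc.exists_bound_of_continuousOn hρ.continuousOn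
  set M : ℝ := max M0 0 with hM_def
  have hM0 : 0 ≤ M := le_max_right _ _
  have hM : ∀ x ∈ Icc (0:ℝ) L, |r x| ≤ M := by
    intro x _
    calc |r x| = ‖ρ (π x)‖ := rfl
      _ ≤ M0 := hM0b _ (hπmem x)
      _ ≤ M := le_max_left _ _
  have hreq : ∀ x ∈ Icc (0:ℝ) L, ρ x = r x := by
    intro x hx
    simp only [hr_def]
    rw [hπeq x hx]
  have heeq : ∀ x ∈ Icc (0:ℝ) L, EI x = e x := by
    intro x hx
    simp only [he_def]
    rw [hπeq x hx]
  have hLmem : L ∈ Icc (0:ℝ) L := ⟨hL.le, le_refl _⟩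
  -- continuity of the first generating functions
  have hvcG : Continuous (fun s => s * (1 / e s)) :=
    continuous_id.mul (continuous_const.div hec he0)
  have hvcH : Continuous (fun s => 1 / e s) := continuous_const.div hec he0
  have hg1c : Continuous (genG r e m 1) := by
    rw [genG_one_eq]
    exact (QOp_continuous hrc hec he0 continuous_const).sub
      (continuous_const.mul (prim_continuous (prim_continuous hvcG)))
  have hh1c : Continuous (genH r e J 1) := by
    rw [genH_one_eq]
    exact (QOp_continuous (continuous_id.mul hrc) hec he0 continuous_const).add
      (continuous_const.mul (prim_continuous (prim_continuous hvcH)))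
  -- bounds on first generating functions
  set CG : ℝ := (M / ce) * L ^ 3 / 24 + (|m| / ce) * L ^ 2 / 6 with hCG_def
  set CH : ℝ := (L * M / ce) * L ^ 3 / 24 + (|J| / ce) * L / 2 with hCH_def
  clear_value CG CH
  have hCG0 : 0 ≤ CG := by rw [hCG_def]; positivity
  have hCH0 : 0 ≤ CH := by
    rw [hCH_def]
    have : (0:ℝ) ≤ L := hL.le
    positivity
  have hg1b := genG_one_bound (L := L) (m := m) hrc hec he0 hce0 hceE hM hM0
  have hh1b := genH_one_bound (L := L) (J := J) hL.le hrc hec he0 hce0 hceE hM hM0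
  rw [← hCG_def] at hg1b
  rw [← hCH_def] at hh1b
  -- sequences of boundary derivatives
  set a : ℕ → ℝ := fun k => derivWithin (genG ρ EI m k) (Icc (0:ℝ) L) L with ha_def
  set b : ℕ → ℝ := fun k => derivWithin (genH ρ EI J k) (Icc (0:ℝ) L) L with hb_def
  clear_value a b
  have haEq : ∀ k : ℕ, a (k + 2)
      = derivWithin ((QOp r e)^[k + 1] (genG r e m 1)) (Icc (0:ℝ) L) L := by
    intro k
    have h1 : derivWithin (genG ρ EI m (k + 2)) (Icc (0:ℝ) L) L
        = derivWithin (genG r e m (k + 2)) (Icc (0:ℝ) L) L :=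
      derivWithin_congr (fun x hx => genG_congr hreq heeq (k + 2) x hx)
        (genG_congr hreq heeq (k + 2) L hLmem)
    rw [show a (k + 2) = derivWithin (genG ρ EI m (k + 2)) (Icc (0:ℝ) L) L by
      rw [ha_def]]
    rw [h1, genG_iterate r e m (k + 1)]
  have hbEq : ∀ k : ℕ, b (k + 2)
      = derivWithin ((QOp r e)^[k + 1] (genH r e J 1)) (Icc (0:ℝ) L) L := by
    intro k
    have h1 : derivWithin (genH ρ EI J (k + 2)) (Icc (0:ℝ) L) L
        = derivWithin (genH r e J (k + 2)) (Icc (0:ℝ) L) L :=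
      derivWithin_congr (fun x hx => genH_congr hreq heeq (k + 2) x hx)
        (genH_congr hreq heeq (k + 2) L hLmem)
    rw [show b (k + 2) = derivWithin (genH ρ EI J (k + 2)) (Icc (0:ℝ) L) L by
      rw [hb_def]]
    rw [h1, genH_iterate r e J (k + 1)]
  have hA2 : ∀ k : ℕ, |a (k + 2)|
      ≤ (M / ce) ^ (k + 1) * CG * L ^ (4 * k + 4) / (4 * k + 4).factorial := by
    intro k
    rw [haEq k]
    exact iterate_derivWithin_bound hL hrc hec he0 hg1c hce0 hceE hM hM0 hCG0 hg1b k
  have hB2 : ∀ k : ℕ, |b (k + 2)|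
      ≤ (M / ce) ^ (k + 1) * CH * L ^ (4 * k + 4) / (4 * k + 4).factorial := by
    intro k
    rw [hbEq k]
    exact iterate_derivWithin_bound hL hrc hec he0 hh1c hce0 hceE hM hM0 hCH0 hh1b k
  -- the geometric-factorial bound for both sequences
  set B : ℝ := 1 + 16 * (M / ce) * L ^ 4 + 4096 * CG + 4096 * CH
      + 4 * |a 0| + 4 * |a 1| + 4 * |b 0| + 4 * |b 1| with hB_def
  clear_value B
  have hKnn : 0 ≤ M / ce := by positivity
  have haux1 : 0 ≤ 16 * (M / ce) * L ^ 4 := by positivity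
  have haux2 : 0 ≤ 4 * |a 0| := by positivity
  have haux3 : 0 ≤ 4 * |a 1| := by positivity
  have haux4 : 0 ≤ 4 * |b 0| := by positivity
  have haux5 : 0 ≤ 4 * |b 1| := by positivity
  have hB1 : 1 ≤ B := by rw [hB_def]; linarith
  have hBa := seq_bound hKnn hCG0 hL.le hB1
    (by rw [hB_def]; linarith [hCG0, hCH0])
    (by rw [hB_def]; linarith [hCG0, hCH0])
    (by rw [hB_def]; linarith [hCG0, hCH0])
    (by rw [hB_def]; linarith [hCG0, hCH0]) hA2
  have hBb := seq_bound hKnn hCH0 hL.le hB1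
    (by rw [hB_def]; linarith [hCG0, hCH0])
    (by rw [hB_def]; linarith [hCG0, hCH0])
    (by rw [hB_def]; linarith [hCG0, hCH0])
    (by rw [hB_def]; linarith [hCG0, hCH0]) hB2
  -- Gevrey bound on derivatives of p at t
  have hcb : ∀ n : ℕ, |iteratedDeriv n p t| ≤ D ^ (n + 1) * ((n).factorial : ℝ) ^ s :=
    fun n => hDb n t ht
  have final := tsum_swap_final (summable_F hB1 hD0 hs₂ hBa hBb hcb)
  simp only [ha_def, hb_def] at final
  exact final
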